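/- arXiv:1012.0457 — 10 statements merged into one kernel-verified Lean document; each statement's English description precedes it below -/
import Mathlib

section
/- Let G be a finite simple bipartite graph with parts V1 and V2 and no isolated vertices. If G is unmixed (all maximal independent sets of vertices have the same cardinality), then |V1| = |V2|. -/
open SimpleGraph MvPolynomial

variable {V : Type*}

/-- `s` is an independent set of the graph `G`. -/
def IsIndep (G : SimpleGraph V) (s : Set V) : Prop :=
  s.Pairwise fun a b => ¬ G.Adj a b

/-- `s` is a maximal independent set of the graph `G`. -/
def IsMaxIndep (G : SimpleGraph V) (s : Set V) : Prop :=
  IsIndep G s ∧ ∀ t : Set V, IsIndep G t → s ⊆ t → s = t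

/-- `G` is unmixed: all maximal independent sets have the same cardinality. -/
def Unmixed (G : SimpleGraph V) : Prop :=
  ∀ s t : Set V, IsMaxIndep G s → IsMaxIndep G t → s.ncard = t.ncard

/-- `V1, V2` form a bipartition of the graph `G`. -/
def IsBipartition (G : SimpleGraph V) (V1 V2 : Set V) : Prop :=
  Disjoint V1 V2 ∧ V1 ∪ V2 = Set.univ ∧
    ∀ ⦃a b⦄, G.Adj a b → (a ∈ V1 ∧ b ∈ V2) ∨ (a ∈ V2 ∧ b ∈ V1)

/-- `G` has no isolated vertices. -/
def NoIsolated (G : SimpleGraph V) : Prop := ∀ v, ∃ w, G.Adj v w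

/-- The edges `{x i, y i}` form a perfect matching of `G`. -/
def PMatch (G : SimpleGraph V) (n : ℕ) (x y : Fin n → V) : Prop :=
  Function.Injective x ∧ Function.Injective y ∧ (∀ i j, x i ≠ y j) ∧
    (∀ v, (∃ i, v = x i) ∨ (∃ i, v = y i)) ∧ ∀ i, G.Adj (x i) (y i)

/-- Condition 1: for each `i` the induced subgraph on `N(x i) ∪ N(y i)` is complete
bipartite, i.e. every vertex of `N(y i)` is adjacent to every vertex of `N(x i)`. -/
def Cond1 (G : SimpleGraph V) (n : ℕ) (x y : Fin n → V) : Prop :=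
  ∀ i, ∀ a ∈ G.neighborSet (y i), ∀ b ∈ G.neighborSet (x i), G.Adj a b

/-- Condition 2: for `i ≠ j`, not both `x i ~ y j` and `x j ~ y i`. -/
def Cond2 (G : SimpleGraph V) (n : ℕ) (x y : Fin n → V) : Prop :=
  ∀ i j, i ≠ j → G.Adj (x i) (y j) → ¬ G.Adj (x j) (y i)

/-- An unmixed bipartite graph with no isolated vertices has parts of equal size. -/
theorem stmt0 [Fintype V] (G : SimpleGraph V) (V1 V2 : Set V)
    (hb : IsBipartition G V1 V2) (hni : NoIsolated G) (hu : Unmixed G) :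
    V1.ncard = V2.ncard := by
  obtain ⟨hdisj, huniv, hadj⟩ := hb
  have hmax : ∀ A B : Set V, Disjoint A B → A ∪ B = Set.univ →
      (∀ ⦃a b⦄, G.Adj a b → (a ∈ A ∧ b ∈ B) ∨ (a ∈ B ∧ b ∈ A)) → IsMaxIndep G A := by
    intro A B hd hu' ha
    constructor
    · intro a haA b hbA _ hab
      rcases ha hab with ⟨h1, h2⟩ | ⟨h1, h2⟩
      · exact hd.ne_of_mem hbA h2 rfl
      · exact hd.ne_of_mem haA h1 rfl
    · intro t ht hsub
      refine hsub.antisymm fun v hv => ?_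
      by_contra hvA
      have hvB : v ∈ B := by
        have : v ∈ A ∪ B := hu' ▸ Set.mem_univ v
        rcases this with h | h; exact absurd h hvA; exact h
      obtain ⟨w, hw⟩ := hni v
      have hwA : w ∈ A := by
        rcases ha hw with ⟨h1, _⟩ | ⟨_, h2⟩
        · exact absurd h1 (hd.ne_of_mem · hvB rfl)
        · exact h2
      exact ht hv (hsub hwA) hw.ne hw
  have h1 : IsMaxIndep G V1 := hmax V1 V2 hdisj huniv hadj
  have h2 : IsMaxIndep G V2 := hmax V2 V1 hdisj.symm (Set.union_comm V2 V1 ▸ huniv)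
    (fun a b hab => (hadj hab).symm)
  exact hu V1 V2 h1 h2
end

section
/- Let G be a finite simple unmixed bipartite graph with parts V1, V2 and no isolated vertices. Then for every nonempty subset A of V1, the neighborhood N(A) in V2 satisfies |N(A)| ≥ |A|. -/
open SimpleGraph MvPolynomial

variable {V : Type*}

/-- Every independent set extends to a maximal independent set. -/
lemma exists_maxIndep_superset (G : SimpleGraph V) (s : Set V) (hs : IsIndep G s) :
    ∃ t, s ⊆ t ∧ IsMaxIndep G t := by
  obtain ⟨m, hsm, hm⟩ := zorn_subset_nonempty {t | IsIndep G t}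
    (fun c hcS hc _ => ⟨⋃₀ c, by
      intro a ha b hb hab
      obtain ⟨u, hu, hau⟩ := ha
      obtain ⟨w, hw, hbw⟩ := hb
      rcases hc.total hu hw with h1 | h1
      · exact hcS hw (h1 hau) hbw hab
      · exact hcS hu hau (h1 hbw) hab,
      fun t ht => Set.subset_sUnion_of_mem ht⟩) s hs
  exact ⟨m, hsm, hm.1, fun t ht hmt => (hm.2 ht hmt).antisymm' hmt⟩

/-- In an unmixed bipartite graph with no isolated vertices, every nonempty
subset `A` of `V1` satisfies Hall's condition `|N(A)| ≥ |A|`. -/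
theorem stmt2 [Fintype V] (G : SimpleGraph V) (V1 V2 : Set V)
    (hb : IsBipartition G V1 V2) (hni : NoIsolated G) (hu : Unmixed G) :
    ∀ A ⊆ V1, A.Nonempty → A.ncard ≤ {v | v ∈ V2 ∧ ∃ a ∈ A, G.Adj a v}.ncard := by
  obtain ⟨hdisj, hcov, hadj⟩ := hb
  intro A hA _
  set N : Set V := {v | v ∈ V2 ∧ ∃ a ∈ A, G.Adj a v} with hN
  -- V2 is a maximal independent set
  have hV2indep : IsIndep G V2 := by
    intro a ha b hb' _ h
    rcases hadj h with ⟨h1, _⟩ | ⟨_, h1⟩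
    · exact Set.disjoint_left.mp hdisj h1 ha
    · exact Set.disjoint_left.mp hdisj h1 hb'
  have hV2max : IsMaxIndep G V2 := by
    refine ⟨hV2indep, fun t ht hsub => hsub.antisymm fun v hv => ?_⟩
    by_contra hv2
    obtain ⟨w, hw⟩ := hni v
    have hwV2 : w ∈ V2 := by
      rcases hadj hw with ⟨_, h1⟩ | ⟨h1, _⟩
      · exact h1
      · exact absurd h1 hv2
    exact ht hv (hsub hwV2) hw.ne hw
  -- A ∪ (V2 \ N) is independent
  have hs0 : IsIndep G (A ∪ (V2 \ N)) := by
    rintro a (ha | ha) b (hb' | hb') _ h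
    · rcases hadj h with ⟨h1, h2⟩ | ⟨h1, h2⟩
      · exact Set.disjoint_left.mp hdisj (hA hb') h2
      · exact Set.disjoint_left.mp hdisj (hA ha) h1
    · exact hb'.2 ⟨hb'.1, a, ha, h⟩
    · exact ha.2 ⟨ha.1, b, hb', h.symm⟩
    · rcases hadj h with ⟨h1, h2⟩ | ⟨h1, h2⟩
      · exact Set.disjoint_left.mp hdisj h1 ha.1
      · exact Set.disjoint_left.mp hdisj h2 hb'.1
  obtain ⟨T, hsT, hTmax⟩ := exists_maxIndep_superset G _ hs0
  have hAT : A ⊆ T := (Set.subset_union_left).trans hsT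
  have hVNT : V2 \ N ⊆ T := (Set.subset_union_right).trans hsT
  -- T contains no vertex of N
  have hTN : Disjoint T N := by
    rw [Set.disjoint_right]
    rintro v ⟨hv2, a, haA, hav⟩ hvT
    exact hTmax.1 (hAT haA) hvT (G.ne_of_adj hav) hav
  -- T = (T ∩ V1) ∪ (V2 \ N)
  have hTeq : T = (T ∩ V1) ∪ (V2 \ N) := by
    apply Set.Subset.antisymm
    · intro v hv
      have : v ∈ V1 ∪ V2 := hcov ▸ Set.mem_univ v
      rcases this with h1 | h1
      · exact Or.inl ⟨hv, h1⟩
      · exact Or.inr ⟨h1, fun hn => hTN.ne_of_mem hv hn rfl⟩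
    · exact Set.union_subset (Set.inter_subset_left) hVNT
  have hcard : T.ncard = V2.ncard := hu T V2 hTmax hV2max
  have hNsub : N ⊆ V2 := fun v hv => hv.1
  have hdisj2 : Disjoint (T ∩ V1) (V2 \ N) :=
    Set.disjoint_of_subset (Set.inter_subset_right) (Set.diff_subset)
      (hdisj)
  have h1 : (T ∩ V1).ncard + (V2 \ N).ncard = V2.ncard := by
    rw [← Set.ncard_union_eq hdisj2 (Set.toFinite _) (Set.toFinite _), ← hTeq, hcard]
  have h2 : N.ncard + (V2 \ N).ncard = V2.ncard := by
    rw [add_comm]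
    exact Set.ncard_diff_add_ncard_of_subset hNsub (Set.toFinite _)
  have h3 : (T ∩ V1).ncard = N.ncard := by omega
  calc A.ncard ≤ (T ∩ V1).ncard :=
        Set.ncard_le_ncard (Set.subset_inter hAT hA) (Set.toFinite _)
    _ = N.ncard := h3
end

section
/- Every finite simple unmixed bipartite graph with no isolated vertices has a perfect matching. -/
open SimpleGraph MvPolynomial

variable {V : Type*}

/-!
Both sides of the bipartition are maximal independent sets, so by unmixedness every maximal
independent set has `|V₂|` elements. For `S ⊆ V₁`, the set `S ∪ (V₂ \ N(S))` is independent;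
extending it to a maximal one gives `|S| + |V₂| - |N(S)| ≤ |V₂|`, i.e. Hall's condition
`|S| ≤ |N(S)|`. The same holds inside `V₂`, hence for every vertex set, and Hall's theorem yields
a perfect matching.
-/

section

variable {G : SimpleGraph V} {s t : Set V}

lemma IsIndep.exists_isMaxIndep_superset [Finite V] (hs : IsIndep G s) :
    ∃ t, s ⊆ t ∧ IsMaxIndep G t := by
  obtain ⟨t, ⟨ht, hst⟩, hmax⟩ :=
    (Set.toFinite {u : Set V | IsIndep G u ∧ s ⊆ u}).exists_maximalFor id _ ⟨s, hs, subset_rfl⟩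
  exact ⟨t, hst, ht, fun u hu htu => htu.antisymm (hmax ⟨hu, hst.trans htu⟩ htu)⟩

lemma Unmixed.ncard_le_ncard_iUnion_neighborSet [Finite V] (hu : Unmixed G)
    (hs : IsIndep G s) (ht : IsMaxIndep G t) (hst : Disjoint s t) :
    s.ncard ≤ (⋃ x ∈ s, G.neighborSet x).ncard := by
  set N := ⋃ x ∈ s, G.neighborSet x
  have hind : IsIndep G (s ∪ (t \ N)) := by
    rintro a (ha | ⟨ha, haN⟩) b (hb | ⟨hb, hbN⟩) hne hab
    · exact hs ha hb hne hab
    · exact hbN (Set.mem_biUnion ha hab)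
    · exact haN (Set.mem_biUnion hb hab.symm)
    · exact ht.1 ha hb hne hab
  obtain ⟨T, hsT, hT⟩ := hind.exists_isMaxIndep_superset
  have hdisj : Disjoint s (t \ N) := hst.mono_right Set.sdiff_subset
  have hlarge : s.ncard + (t \ N).ncard ≤ t.ncard := by
    rw [← Set.ncard_union_eq hdisj, ← hu T t hT ht]
    exact Set.ncard_le_ncard hsT
  have hsmall : t.ncard ≤ (t \ N).ncard + N.ncard := Set.ncard_le_ncard_sdiff_add_ncard t N
  omega

end

namespace SimpleGraph

variable {G : SimpleGraph V} {s t : Set V}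

lemma IsBipartiteWith.isIndep (h : G.IsBipartiteWith s t) : IsIndep G s :=
  fun _ ha _ hb _ hab => Set.disjoint_left.mp h.disjoint hb (h.mem_of_mem_adj ha hab)

lemma IsBipartiteWith.isMaxIndep (h : G.IsBipartiteWith s t) (hcover : s ∪ t = Set.univ)
    (hni : NoIsolated G) : IsMaxIndep G s := by
  refine ⟨h.isIndep, fun u hu hsu => hsu.antisymm fun v hv => ?_⟩
  by_contra hvs
  have hvt : v ∈ t := (hcover ▸ Set.mem_univ v : v ∈ s ∪ t).resolve_left hvs
  obtain ⟨w, hvw⟩ := hni v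
  exact hu hv (hsu (h.mem_of_mem_adj' hvt hvw.symm)) hvw.ne hvw

lemma IsBipartiteWith.ncard_le_ncard_iUnion_neighborSet [Finite V] (h : G.IsBipartiteWith s t)
    (hcover : s ∪ t = Set.univ) (hni : NoIsolated G) (hu : Unmixed G) (u : Set V) :
    u.ncard ≤ (⋃ x ∈ u, G.neighborSet x).ncard := by
  have hs := h.isMaxIndep hcover hni
  have ht := h.symm.isMaxIndep (Set.union_comm s t ▸ hcover) hni
  have hus : (u ∩ s).ncard ≤ (⋃ x ∈ u ∩ s, G.neighborSet x).ncard :=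
    hu.ncard_le_ncard_iUnion_neighborSet (Set.Pairwise.mono Set.inter_subset_right hs.1) ht
      (h.disjoint.mono_left Set.inter_subset_right)
  have hut : (u ∩ t).ncard ≤ (⋃ x ∈ u ∩ t, G.neighborSet x).ncard :=
    hu.ncard_le_ncard_iUnion_neighborSet (Set.Pairwise.mono Set.inter_subset_right ht.1) hs
      (h.disjoint.symm.mono_left Set.inter_subset_right)
  have hN : Disjoint (⋃ x ∈ u ∩ s, G.neighborSet x) (⋃ x ∈ u ∩ t, G.neighborSet x) :=
    h.disjoint.symm.mono
      (Set.iUnion₂_subset fun _ hx => isBipartiteWith_neighborSet_subset h hx.2)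
      (Set.iUnion₂_subset fun _ hx => isBipartiteWith_neighborSet_subset h.symm hx.2)
  calc u.ncard = (u ∩ s).ncard + (u ∩ t).ncard := by
        rw [← Set.ncard_union_eq (h.disjoint.mono Set.inter_subset_right Set.inter_subset_right),
          ← Set.inter_union_distrib_left, hcover, Set.inter_univ]
    _ ≤ (⋃ x ∈ u ∩ s, G.neighborSet x).ncard + (⋃ x ∈ u ∩ t, G.neighborSet x).ncard :=
        add_le_add hus hut
    _ = ((⋃ x ∈ u ∩ s, G.neighborSet x) ∪ ⋃ x ∈ u ∩ t, G.neighborSet x).ncard :=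
        (Set.ncard_union_eq hN).symm
    _ ≤ (⋃ x ∈ u, G.neighborSet x).ncard :=
        Set.ncard_le_ncard (Set.union_subset
          (Set.biUnion_subset_biUnion_left Set.inter_subset_left)
          (Set.biUnion_subset_biUnion_left Set.inter_subset_left))

end SimpleGraph

/-- Every unmixed bipartite graph with no isolated vertices has a perfect matching. -/
theorem stmt3 [Fintype V] (G : SimpleGraph V) (V1 V2 : Set V)
    (hb : IsBipartition G V1 V2) (hni : NoIsolated G) (hu : Unmixed G) :
    ∃ M : G.Subgraph, M.IsPerfectMatching := by
  classical
  obtain ⟨hdisj, hcover, hadj⟩ := hb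
  have hbip : G.IsBipartiteWith V1 V2 := ⟨hdisj, hadj⟩
  exact exists_isPerfectMatching_of_forall_ncard_le hbip
    (hbip.ncard_le_ncard_iUnion_neighborSet hcover hni hu)
end

section
/- Let G be a bipartite graph with a perfect matching {x_1,y_1},...,{x_n,y_n} such that for every i, every vertex of N(y_i) is adjacent to every vertex of N(x_i). Then every maximal independent set of G meets each edge {x_i,y_i} of the matching in exactly one vertex; in particular every maximal independent set has cardinality n, so G is unmixed. -/
open SimpleGraph MvPolynomial

variable {V : Type*}

/-- If a bipartite graph has a perfect matching satisfying condition 1, then every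
maximal independent set meets each matching edge in exactly one vertex, has
cardinality `n`, and the graph is unmixed. -/
theorem stmt5 (G : SimpleGraph V) {n : ℕ} (x y : Fin n → V)
    (hb : IsBipartition G (Set.range x) (Set.range y))
    (hm : PMatch G n x y) (h1 : Cond1 G n x y) :
    (∀ s : Set V, IsMaxIndep G s → ∀ i, ∃! v, v ∈ s ∧ (v = x i ∨ v = y i)) ∧
    (∀ s : Set V, IsMaxIndep G s → s.ncard = n) ∧
    Unmixed G := by
  obtain ⟨hx, hy, hxy, hsurj, hadj⟩ := hm
  have key : ∀ s : Set V, IsMaxIndep G s → ∀ i, ∃! v, v ∈ s ∧ (v = x i ∨ v = y i) := by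
    intro s ⟨hsi, hsmax⟩ i
    -- auxiliary: if u ∉ s then some vertex of s is adjacent to u
    have aux : ∀ u : V, u ∉ s → ∃ v ∈ s, G.Adj v u := by
      intro u hu
      by_contra hc
      push_neg at hc
      have hind : IsIndep G (insert u s) := by
        intro a ha b hb hab
        rcases ha with rfl | ha
        · rcases hb with rfl | hb
          · exact absurd rfl hab
          · exact fun h => hc b hb h.symm
        · rcases hb with rfl | hb
          · exact hc a ha
          · exact hsi ha hb hab
      have := hsmax _ hind (Set.subset_insert _ _)
      exact hu (this ▸ Set.mem_insert _ _)
    have hex : x i ∈ s ∨ y i ∈ s := by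
      by_contra h
      push_neg at h
      obtain ⟨v, hv, hvx⟩ := aux (x i) h.1
      obtain ⟨w, hw, hwy⟩ := aux (y i) h.2
      have hadjwv : G.Adj w v := h1 i w hwy.symm v hvx.symm
      exact hsi hw hv hadjwv.ne hadjwv
    have hnotboth : ¬ (x i ∈ s ∧ y i ∈ s) := by
      rintro ⟨hxs, hys⟩
      exact hsi hxs hys (hadj i).ne (hadj i)
    rcases hex with hxs | hys
    · refine ⟨x i, ⟨hxs, Or.inl rfl⟩, ?_⟩
      rintro v ⟨hv, rfl | rfl⟩
      · rfl
      · exact absurd ⟨hxs, hv⟩ hnotboth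
    · refine ⟨y i, ⟨hys, Or.inr rfl⟩, ?_⟩
      rintro v ⟨hv, rfl | rfl⟩
      · exact absurd ⟨hv, hys⟩ hnotboth
      · rfl
  have card : ∀ s : Set V, IsMaxIndep G s → s.ncard = n := by
    intro s hs
    choose f hf hfu using key s hs
    have hfs : ∀ i, f i ∈ s := fun i => (hf i).1
    have hfxy : ∀ i, f i = x i ∨ f i = y i := fun i => (hf i).2
    have hfin : Function.Injective f := by
      intro i j hij
      rcases hfxy i with hi | hi <;> rcases hfxy j with hj | hj
      · exact hx (hi ▸ hj ▸ hij)
      · exact absurd (hi ▸ hj ▸ hij) (hxy i j)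
      · exact absurd (hj ▸ hi ▸ hij).symm (hxy j i)
      · exact hy (hi ▸ hj ▸ hij)
    have hrange : s = Set.range f := by
      apply Set.eq_of_subset_of_subset
      · intro v hv
        rcases hsurj v with ⟨i, rfl⟩ | ⟨i, rfl⟩
        · exact ⟨i, (hfu i _ ⟨hv, Or.inl rfl⟩).symm⟩
        · exact ⟨i, (hfu i _ ⟨hv, Or.inr rfl⟩).symm⟩
      · rintro v ⟨i, rfl⟩
        exact hfs i
    rw [hrange, ← Set.image_univ, Set.ncard_image_of_injective _ hfin,
      Set.ncard_univ, Nat.card_eq_fintype_card, Fintype.card_fin]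
  exact ⟨key, card, fun s t hs ht => (card s hs).trans (card t ht).symm⟩
end

section
/- Let S = K[x_1,...,x_n] be a polynomial ring over a field K and I an ideal generated by squarefree quadratic monomials, with x_i^2 ∉ I and x_j^2 ∉ I for some i < j. Then the image of x_i + x_j is a zero-divisor in S/I if and only if either (i) there exists k ∉ {i,j} with x_k x_i ∈ I and x_k x_j ∈ I, or (ii) there exist k < l, both distinct from i and j, with x_k x_l ∉ I, x_k x_l x_i ∈ I and x_k x_l x_j ∈ I. -/
open SimpleGraph MvPolynomial

variable {V : Type*}

/-! The pairs `a ≠ b` with `x_a x_b ∈ I` form a graph `G`, and `I` is its edge ideal: a polynomial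
lies in `I` iff the support of each of its monomials contains an edge of `G`. If `(x_i + x_j) p ∈ I`
with `p ∉ I`, pick a monomial `m` of `p` with independent support and `m_i` maximal. No other term
of `(x_i + x_j) p` can cancel `x_i m`, so `x_i m ∈ I`; this forces `m_i = 0`, and then `x_j m` cannot
be cancelled either, so `x_j m ∈ I`. Hence the independent set `supp m` contains a neighbour `k`
of `i` and a neighbour `l` of `j`: either `k = l`, or `x_k x_l ∉ I` while `x_k x_l x_i` and
`x_k x_l x_j` lie in `I`. Conversely `x_k`, resp. `x_k x_l`, is killed by `x_i + x_j`. -/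

lemma not_isIndep_iff {G : SimpleGraph V} {s : Set V} :
    ¬ IsIndep G s ↔ ∃ a ∈ s, ∃ b ∈ s, G.Adj a b := by
  simp only [IsIndep, Set.Pairwise, not_forall, not_not, exists_prop]
  exact ⟨fun ⟨a, ha, b, hb, _, hab⟩ => ⟨a, ha, b, hb, hab⟩,
    fun ⟨a, ha, b, hb, hab⟩ => ⟨a, ha, b, hb, hab.ne, hab⟩⟩

lemma exists_adj_of_not_isIndep_insert {G : SimpleGraph V} {s : Set V} {i : V}
    (hs : IsIndep G s) (hi : ¬ IsIndep G (insert i s)) : ∃ k ∈ s, G.Adj k i := by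
  by_contra! h
  exact hi (hs.insert fun k hk _ => ⟨fun hik => h k hk hik.symm, h k hk⟩)

lemma Finsupp.single_one_add_single_one_le_iff {a b : V} (hab : a ≠ b) (m : V →₀ ℕ) :
    single a 1 + single b 1 ≤ m ↔ a ∈ m.support ∧ b ∈ m.support := by
  classical
  simp only [le_def, coe_add, Pi.add_apply, single_apply, mem_support_iff]
  refine ⟨fun h => ⟨?_, ?_⟩, fun ⟨ha, hb⟩ c => ?_⟩
  · have := h a; simp only [if_true, hab.symm, if_false] at this; omega
  · have := h b; simp only [if_true, hab, if_false] at this; omega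
  · split_ifs <;> subst_vars <;> first | omega | exact absurd rfl hab

lemma Finsupp.support_single_one_add [DecidableEq V] (i : V) (m : V →₀ ℕ) :
    (single i 1 + m).support = insert i m.support := by
  rw [support_add_eq_union, support_single _ one_ne_zero, Finset.insert_eq]

lemma Ideal.Quotient.exists_ne_zero_mk_mul_eq_zero_iff {A : Type*} [CommRing A] (I : Ideal A)
    (a : A) : (∃ s : A ⧸ I, s ≠ 0 ∧ mk I a * s = 0) ↔ ∃ p ∉ I, a * p ∈ I := by
  simp only [mk_surjective.exists, ne_eq, ← map_mul, eq_zero_iff_mem]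

section EdgeIdeal

variable {R : Type*} [CommSemiring R]

noncomputable def edgeIdeal (G : SimpleGraph V) : Ideal (MvPolynomial V R) :=
  Ideal.span {f | ∃ a b, G.Adj a b ∧ f = X a * X b}

def edgeGraph (I : Ideal (MvPolynomial V R)) : SimpleGraph V :=
  SimpleGraph.fromRel fun a b => X a * X b ∈ I

lemma edgeGraph_adj {I : Ideal (MvPolynomial V R)} {a b : V} :
    (edgeGraph I).Adj a b ↔ a ≠ b ∧ X a * X b ∈ I := by
  simp [edgeGraph, mul_comm (X b)]

lemma edgeIdeal_edgeGraph {I : Ideal (MvPolynomial V R)}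
    (hgen : ∃ S : Set (MvPolynomial V R), I = Ideal.span S ∧
      ∀ f ∈ S, ∃ a b : V, a ≠ b ∧ f = X a * X b) :
    edgeIdeal (edgeGraph I) = I := by
  obtain ⟨S, hIS, hS⟩ := hgen
  refine le_antisymm (Ideal.span_le.2 ?_) (hIS ▸ Ideal.span_mono ?_)
  · rintro _ ⟨a, b, hab, rfl⟩
    exact (edgeGraph_adj.1 hab).2
  · intro f hf
    obtain ⟨a, b, hab, rfl⟩ := hS f hf
    exact ⟨a, b, edgeGraph_adj.2 ⟨hab, hIS ▸ Ideal.subset_span hf⟩, rfl⟩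

variable {G : SimpleGraph V}

lemma mem_edgeIdeal_iff {p : MvPolynomial V R} :
    p ∈ edgeIdeal G ↔ ∀ m ∈ p.support, ¬ IsIndep G m.support := by
  have hmonomial : {f : MvPolynomial V R | ∃ a b, G.Adj a b ∧ f = X a * X b} =
      (fun e => monomial e 1) ''
        {e | ∃ a b, G.Adj a b ∧ e = Finsupp.single a 1 + Finsupp.single b 1} := by
    ext f
    simp only [Set.mem_ofPred_eq, Set.mem_image]
    constructor
    · rintro ⟨a, b, hab, rfl⟩
      exact ⟨_, ⟨a, b, hab, rfl⟩, by simp [X, monomial_mul]⟩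
    · rintro ⟨_, ⟨a, b, hab, rfl⟩, rfl⟩
      exact ⟨a, b, hab, by simp [X, monomial_mul]⟩
  rw [edgeIdeal, hmonomial, mem_ideal_span_monomial_image]
  refine forall₂_congr fun m _ => ?_
  rw [not_isIndep_iff]
  constructor
  · rintro ⟨_, ⟨a, b, hab, rfl⟩, hle⟩
    obtain ⟨ha, hb⟩ := (Finsupp.single_one_add_single_one_le_iff hab.ne m).1 hle
    exact ⟨a, ha, b, hb, hab⟩
  · rintro ⟨a, ha, b, hb, hab⟩
    exact ⟨_, ⟨a, b, hab, rfl⟩, (Finsupp.single_one_add_single_one_le_iff hab.ne m).2 ⟨ha, hb⟩⟩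

lemma coeff_eq_zero_of_mem_edgeIdeal {p : MvPolynomial V R} (hp : p ∈ edgeIdeal G)
    {m : V →₀ ℕ} (hm : IsIndep G m.support) : coeff m p = 0 := by
  by_contra hne
  exact mem_edgeIdeal_iff.1 hp m (mem_support_iff.2 hne) hm

lemma X_notMem_edgeIdeal [Nontrivial R] (k : V) : (X k : MvPolynomial V R) ∉ edgeIdeal G := by
  classical
  simp [mem_edgeIdeal_iff, support_X, IsIndep]

variable {i j : V} {p : MvPolynomial V R}

lemma not_isIndep_single_add_of_le (hij : i ≠ j) (h : (X i + X j) * p ∈ edgeIdeal G)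
    {m : V →₀ ℕ} (hm : m ∈ p.support)
    (hmax : ∀ m' ∈ p.support, IsIndep G m'.support → m' i ≤ m i) :
    ¬ IsIndep G (Finsupp.single i 1 + m).support := by
  classical
  intro hind
  have hcoeff := coeff_eq_zero_of_mem_edgeIdeal h hind
  rw [add_mul, coeff_add, coeff_X_mul, coeff_X_mul'] at hcoeff
  split_ifs at hcoeff
  · set m' := Finsupp.single i 1 + m - Finsupp.single j 1
    have hm' : coeff m' p = 0 := by
      by_contra hne
      have := hmax m' (mem_support_iff.2 hne) (hind.mono (Finsupp.support_mono tsub_le_self))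
      simp [m', hij] at this
    rw [hm', add_zero] at hcoeff
    exact mem_support_iff.1 hm hcoeff
  · rw [add_zero] at hcoeff
    exact mem_support_iff.1 hm hcoeff

lemma coeff_single_add_X_add_X_mul (hij : i ≠ j) {m : V →₀ ℕ} (hmi : m i = 0) :
    coeff (Finsupp.single j 1 + m) ((X i + X j) * p) = coeff m p := by
  classical
  rw [add_mul, coeff_add, coeff_X_mul, coeff_X_mul', if_neg, zero_add]
  simp [hij, hmi]

theorem exists_isIndep_of_mul_mem_edgeIdeal (hij : i ≠ j) (hp : p ∉ edgeIdeal G)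
    (h : (X i + X j) * p ∈ edgeIdeal G) :
    ∃ s : Set V, IsIndep G s ∧ (∃ k ∈ s, G.Adj k i) ∧ (∃ l ∈ s, G.Adj l j) := by
  classical
  obtain ⟨m, hm, hmax⟩ : ∃ m ∈ p.support.filter (fun m => IsIndep G m.support),
      ∀ m' ∈ p.support.filter (fun m => IsIndep G m.support), m' i ≤ m i := by
    refine Finset.exists_max_image _ _ ?_
    simpa [mem_edgeIdeal_iff, Finset.Nonempty] using hp
  obtain ⟨hm, hind⟩ := Finset.mem_filter.1 hm
  have hi : ¬ IsIndep G (insert i m.support : Finset V) := by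
    rw [← Finsupp.support_single_one_add]
    exact not_isIndep_single_add_of_le hij h hm fun m' hm' hind' =>
      hmax m' (Finset.mem_filter.2 ⟨hm', hind'⟩)
  have hmi : m i = 0 := by
    by_contra hmi
    rw [Finset.insert_eq_of_mem (Finsupp.mem_support_iff.2 hmi)] at hi
    exact hi hind
  have hj : ¬ IsIndep G (insert j m.support : Finset V) := by
    rw [← Finsupp.support_single_one_add]
    intro hind'
    refine mem_support_iff.1 hm ?_
    rw [← coeff_single_add_X_add_X_mul hij hmi]
    exact coeff_eq_zero_of_mem_edgeIdeal h hind'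
  rw [Finset.coe_insert] at hi hj
  exact ⟨m.support, hind, exists_adj_of_not_isIndep_insert hind hi,
    exists_adj_of_not_isIndep_insert hind hj⟩

end EdgeIdeal

lemma commonNeighbor_or_nonEdge_of_isIndep [LinearOrder V] {R : Type*} [CommSemiring R]
    {I : Ideal (MvPolynomial V R)} {i j k l : V} {s : Set V} (hs : IsIndep (edgeGraph I) s)
    (hks : k ∈ s) (hki : (edgeGraph I).Adj k i) (hls : l ∈ s) (hlj : (edgeGraph I).Adj l j) :
    (∃ k : V, k ≠ i ∧ k ≠ j ∧ X k * X i ∈ I ∧ X k * X j ∈ I) ∨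
      (∃ k l : V, k < l ∧ k ≠ i ∧ k ≠ j ∧ l ≠ i ∧ l ≠ j ∧
        X k * X l ∉ I ∧ X k * X l * X i ∈ I ∧ X k * X l * X j ∈ I) := by
  have hkj : k ≠ j := by rintro rfl; exact hs hls hks hlj.ne hlj
  have hli : l ≠ i := by rintro rfl; exact hs hks hls hki.ne hki
  rw [edgeGraph_adj] at hki hlj
  rcases eq_or_ne k l with rfl | hkl
  · exact Or.inl ⟨k, hki.1, hkj, hki.2, hlj.2⟩
  have hkl' : X k * X l ∉ I := fun h => hs hks hls hkl (edgeGraph_adj.2 ⟨hkl, h⟩)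
  have hi : X k * X l * X i ∈ I := by
    rw [mul_right_comm]; exact I.mul_mem_right _ hki.2
  have hj : X k * X l * X j ∈ I := by
    rw [mul_assoc]; exact I.mul_mem_left _ hlj.2
  rcases hkl.lt_or_gt with hlt | hgt
  · exact Or.inr ⟨k, l, hlt, hki.1, hkj, hli, hlj.1, hkl', hi, hj⟩
  · refine Or.inr ⟨l, k, hgt, hli, hlj.1, hki.1, hkj, ?_, ?_, ?_⟩ <;> rwa [mul_comm (X l)]

theorem stmt7_general {K : Type*} [Field K] {n : ℕ} (I : Ideal (MvPolynomial (Fin n) K))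
    (hgen : ∃ S : Set (MvPolynomial (Fin n) K), I = Ideal.span S ∧
      ∀ f ∈ S, ∃ a b : Fin n, a ≠ b ∧ f = X a * X b)
    (i j : Fin n) (hij : i < j) :
    (∃ s : MvPolynomial (Fin n) K ⧸ I, s ≠ 0 ∧ Ideal.Quotient.mk I (X i + X j) * s = 0) ↔
      ((∃ k : Fin n, k ≠ i ∧ k ≠ j ∧ X k * X i ∈ I ∧ X k * X j ∈ I) ∨
       (∃ k l : Fin n, k < l ∧ k ≠ i ∧ k ≠ j ∧ l ≠ i ∧ l ≠ j ∧
          X k * X l ∉ I ∧ X k * X l * X i ∈ I ∧ X k * X l * X j ∈ I)) := by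
  have hI := edgeIdeal_edgeGraph hgen
  rw [Ideal.Quotient.exists_ne_zero_mk_mul_eq_zero_iff]
  constructor
  · rintro ⟨p, hp, hmul⟩
    rw [← hI] at hp hmul
    obtain ⟨s, hs, ⟨k, hks, hki⟩, ⟨l, hls, hlj⟩⟩ :=
      exists_isIndep_of_mul_mem_edgeIdeal hij.ne hp hmul
    exact commonNeighbor_or_nonEdge_of_isIndep hs hks hki hls hlj
  · rintro (⟨k, -, -, hki, hkj⟩ | ⟨k, l, -, -, -, -, -, hkl, hi, hj⟩)
    · refine ⟨X k, by rw [← hI]; exact X_notMem_edgeIdeal k, ?_⟩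
      rw [add_mul, mul_comm (X i), mul_comm (X j)]
      exact I.add_mem hki hkj
    · refine ⟨X k * X l, hkl, ?_⟩
      rw [add_mul, mul_comm (X i), mul_comm (X j)]
      exact I.add_mem hi hj

/-- Characterization of when `x i + x j` is a zero-divisor modulo an ideal generated
by squarefree quadratic monomials. -/
theorem stmt7 {K : Type*} [Field K] {n : ℕ} (I : Ideal (MvPolynomial (Fin n) K))
    (hgen : ∃ S : Set (MvPolynomial (Fin n) K), I = Ideal.span S ∧
      ∀ f ∈ S, ∃ a b : Fin n, a ≠ b ∧ f = X a * X b)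
    (i j : Fin n) (hij : i < j)
    (hi2 : (X i : MvPolynomial (Fin n) K) ^ 2 ∉ I)
    (hj2 : (X j : MvPolynomial (Fin n) K) ^ 2 ∉ I) :
    (∃ s : MvPolynomial (Fin n) K ⧸ I, s ≠ 0 ∧ Ideal.Quotient.mk I (X i + X j) * s = 0) ↔
      ((∃ k : Fin n, k ≠ i ∧ k ≠ j ∧ X k * X i ∈ I ∧ X k * X j ∈ I) ∨
       (∃ k l : Fin n, k < l ∧ k ≠ i ∧ k ≠ j ∧ l ≠ i ∧ l ≠ j ∧
          X k * X l ∉ I ∧ X k * X l * X i ∈ I ∧ X k * X l * X j ∈ I)) :=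
  stmt7_general I hgen i j hij
end

section
/- Let G be a bipartite graph with parts V1, V2 and a perfect matching satisfying the two combinatorial Cohen-Macaulayness conditions (each N(x_i) ∪ N(y_i) induces a complete bipartite graph; no i ≠ j with both x_i ~ y_j and x_j ~ y_i). Then each part contains a vertex of degree one. -/
open SimpleGraph MvPolynomial

variable {V : Type*}

/-- A bipartite graph with a perfect matching satisfying the two Cohen-Macaulayness
conditions has a vertex of degree one in each part. -/
theorem stmt10 [Fintype V] (G : SimpleGraph V) {n : ℕ} (hn : 0 < n) (x y : Fin n → V)
    (hb : IsBipartition G (Set.range x) (Set.range y))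
    (hm : PMatch G n x y) (h1 : Cond1 G n x y) (h2 : Cond2 G n x y) :
    (∃ i, (G.neighborSet (x i)).ncard = 1) ∧ (∃ i, (G.neighborSet (y i)).ncard = 1) := by
  obtain ⟨hxinj, hyinj, hxy, hcov, hadj⟩ := hm
  obtain ⟨hdisj, huniv, hbip⟩ := hb
  -- the strict relation
  set s : Fin n → Fin n → Prop := fun i j => i ≠ j ∧ G.Adj (x i) (y j) with hs
  have hstrans : ∀ {i j k}, s i j → s j k → s i k := by
    rintro i j k ⟨hij, aij⟩ ⟨hjk, ajk⟩
    have hik : G.Adj (x i) (y k) := h1 j (x i) aij.symm (y k) ajk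
    refine ⟨?_, hik⟩
    rintro rfl
    exact h2 i j hij aij ajk
  have hT : IsTrans (Fin n) s := ⟨fun _ _ _ => hstrans⟩
  have hI : IsIrrefl (Fin n) s := ⟨fun i h => h.1 rfl⟩
  have hT' : IsTrans (Fin n) (flip s) := ⟨fun _ _ _ h h' => hstrans h' h⟩
  have hI' : IsIrrefl (Fin n) (flip s) := ⟨fun i h => h.1 rfl⟩
  have wf1 : WellFounded s := @Finite.wellFounded_of_trans_of_irrefl _ _ s hT hI
  have wf2 : WellFounded (flip s) := @Finite.wellFounded_of_trans_of_irrefl _ _ _ hT' hI'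
  have hne : (Set.univ : Set (Fin n)).Nonempty := ⟨⟨0, hn⟩, trivial⟩
  -- a vertex is either an x or a y but not both
  have hxV1 : ∀ i, x i ∈ Set.range x := fun i => ⟨i, rfl⟩
  have hyV2 : ∀ i, y i ∈ Set.range y := fun i => ⟨i, rfl⟩
  have hxnotV2 : ∀ i, x i ∉ Set.range y := by
    rintro i ⟨j, hj⟩; exact hxy i j hj.symm
  have hynotV1 : ∀ i, y i ∉ Set.range x := by
    rintro i ⟨j, hj⟩; exact hxy j i hj
  constructor
  · obtain ⟨m, -, hmax⟩ := wf2.has_min Set.univ hne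
    refine ⟨m, ?_⟩
    have : G.neighborSet (x m) = {y m} := by
      ext v
      simp only [SimpleGraph.mem_neighborSet, Set.mem_singleton_iff]
      constructor
      · intro hv
        rcases hbip hv with ⟨-, hv2⟩ | ⟨hv1, -⟩
        · obtain ⟨j, rfl⟩ := hv2
          by_contra hne'
          have hjm : j ≠ m := fun h => by subst h; exact hne' rfl
          exact hmax j trivial ⟨fun h => hjm h.symm, hv⟩
        · exact absurd hv1 (hxnotV2 m)
      · rintro rfl; exact hadj m
    rw [this, Set.ncard_singleton]
  · obtain ⟨m, -, hmin⟩ := wf1.has_min Set.univ hne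
    refine ⟨m, ?_⟩
    have : G.neighborSet (y m) = {x m} := by
      ext v
      simp only [SimpleGraph.mem_neighborSet, Set.mem_singleton_iff]
      constructor
      · intro hv
        rcases hbip hv with ⟨hv1, -⟩ | ⟨-, hv2⟩
        · exact absurd hv1 (hynotV1 m)
        · obtain ⟨j, rfl⟩ := hv2
          by_contra hne'
          have hjm : j ≠ m := fun h => by subst h; exact hne' rfl
          exact hmin j trivial ⟨hjm, hv.symm⟩
      · rintro rfl; exact (hadj m).symm
    rw [this, Set.ncard_singleton]
end

section
/- Let G be a bipartite graph with a perfect matching {x_1,y_1},...,{x_n,y_n} satisfying the two combinatorial Cohen-Macaulayness conditions. Let y be a vertex of V2 of maximal degree and x its partner in the matching. Then deg(x) = 1. -/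
open SimpleGraph MvPolynomial

variable {V : Type*}

/-- If `y i` has maximal degree among all `y j`, then its matching partner `x i`
has degree one. -/
theorem stmt11 [Fintype V] (G : SimpleGraph V) {n : ℕ} (x y : Fin n → V)
    (hb : IsBipartition G (Set.range x) (Set.range y))
    (hm : PMatch G n x y) (h1 : Cond1 G n x y) (h2 : Cond2 G n x y)
    (i : Fin n) (hmax : ∀ j, (G.neighborSet (y j)).ncard ≤ (G.neighborSet (y i)).ncard) :
    (G.neighborSet (x i)).ncard = 1 := by
  obtain ⟨hxinj, hyinj, hxy, hcov, hadj⟩ := hm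
  have hset : G.neighborSet (x i) = {y i} := by
    ext b
    simp only [SimpleGraph.mem_neighborSet, Set.mem_singleton_iff]
    constructor
    · intro hadj_b
      -- b is in range y
      have hbr : b ∈ Set.range y := by
        rcases hb.2.2 hadj_b with ⟨hx1, hb2⟩ | ⟨hx2, hb1⟩
        · exact hb2
        · exfalso
          rcases hx2 with ⟨j, hj⟩
          exact hxy i j hj.symm
      obtain ⟨j, rfl⟩ := hbr
      by_contra hne
      have hij : i ≠ j := fun h => hne (congrArg y h).symm
      -- x i ~ y j, derive contradiction with maximality
      have hsub : G.neighborSet (y i) ⊆ G.neighborSet (y j) := by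
        intro a ha
        have : G.Adj a (y j) := h1 i a ha (y j) hadj_b
        exact this.symm
      have hxjin : x j ∈ G.neighborSet (y j) := (hadj j).symm
      have hxjnot : x j ∉ G.neighborSet (y i) := by
        intro hc
        exact h2 i j hij hadj_b (SimpleGraph.Adj.symm hc)
      have hlt : (G.neighborSet (y i)).ncard < (G.neighborSet (y j)).ncard :=
        Set.ncard_lt_ncard ⟨hsub, fun hs => hxjnot (hs hxjin)⟩ (Set.toFinite _)
      exact absurd (hmax j) (not_le.mpr hlt)
    · rintro rfl
      exact hadj i
  rw [hset, Set.ncard_singleton]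
end

section
/- Let G be a bipartite graph with a perfect matching {x_1,y_1},...,{x_n,y_n} satisfying the two combinatorial Cohen-Macaulayness conditions. Then this perfect matching is the unique perfect matching of G. -/
open SimpleGraph MvPolynomial

variable {V : Type*}

/-- A bipartite graph with a perfect matching satisfying the two Cohen-Macaulayness
conditions has this matching as its unique perfect matching. -/
theorem stmt12 [Fintype V] (G : SimpleGraph V) {n : ℕ} (x y : Fin n → V)
    (hb : IsBipartition G (Set.range x) (Set.range y))
    (hm : PMatch G n x y) (h1 : Cond1 G n x y) (h2 : Cond2 G n x y) :
    ∀ M : G.Subgraph, M.IsPerfectMatching →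
      M.edgeSet = {e | ∃ i, e = s(x i, y i)} := by
  intro M hM
  obtain ⟨hmat, hspan⟩ := hM
  -- the order relation
  have hrefl : ∀ i, G.Adj (x i) (y i) := hm.2.2.2.2
  have htrans : ∀ i j k : Fin n, G.Adj (x i) (y j) → G.Adj (x j) (y k) →
      G.Adj (x i) (y k) := by
    intro i j k hij hjk
    exact h1 j (x i) hij.symm (y k) hjk
  have hanti : ∀ i j : Fin n, G.Adj (x i) (y j) → G.Adj (x j) (y i) → i = j := by
    intro i j hij hji
    by_contra hne
    exact h2 i j hne hij hji
  -- construct σ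
  have key : ∀ i, ∃ j, M.Adj (x i) (y j) := by
    intro i
    obtain ⟨w, hw, -⟩ := hmat (hspan (x i))
    have hG : G.Adj (x i) w := M.adj_sub hw
    rcases hb.2.2 hG with ⟨-, hw2⟩ | ⟨hx2, -⟩
    · obtain ⟨j, rfl⟩ := hw2; exact ⟨j, hw⟩
    · obtain ⟨j, hj⟩ := hx2
      exact absurd hj.symm (hm.2.2.1 i j)
  choose σ hσ using key
  have hσinj : Function.Injective σ := by
    intro i j hij
    obtain ⟨w, hw, huniq⟩ := hmat (hspan (y (σ i)))
    have h1' : x i = w := huniq (x i) (hσ i).symm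
    have h2' : x j = w := huniq (x j) (hij ▸ (hσ j).symm)
    exact hm.1 (h1'.trans h2'.symm)
  have hri : ∀ i, G.Adj (x i) (y (σ i)) := fun i => M.adj_sub (hσ i)
  have hchain : ∀ (k : ℕ) (j : Fin n), G.Adj (x j) (y (σ^[k] j)) := by
    intro k
    induction k with
    | zero => intro j; exact hrefl j
    | succ k ih =>
      intro j
      rw [Function.iterate_succ_apply']
      exact htrans j (σ^[k] j) _ (ih j) (hri _)
  have hfix : ∀ i, σ i = i := by
    intro i
    have main : ∀ k l : ℕ, k < l → σ^[k] i = σ^[l] i → σ i = i := by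
      intro k l hkl he
      have hinj : Function.Injective (σ^[k]) := hσinj.iterate k
      have hiter : σ^[l - k] i = i := by
        apply hinj
        rw [← Function.iterate_add_apply, show k + (l - k) = l from by omega]
        exact he.symm
      have hback : G.Adj (x (σ i)) (y i) := by
        have h := hchain (l - k - 1) (σ i)
        rwa [← Function.iterate_succ_apply, show (l - k - 1).succ = l - k from by omega,
          hiter] at h
      exact (hanti i (σ i) (hri i) hback).symm
    obtain ⟨k, hk, l, hl, hkl, he⟩ := Finset.exists_ne_map_eq_of_card_lt_of_maps_to
      (s := Finset.range (n + 1)) (t := (Finset.univ : Finset (Fin n)))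
      (by simp) (fun a _ => Finset.mem_univ (σ^[a] i))
    rcases Nat.lt_or_ge k l with h | h
    · exact main k l h he
    · exact main l k (by omega) he.symm
  have hMi : ∀ i, M.Adj (x i) (y i) := fun i => by have h := hσ i; rwa [hfix i] at h
  ext e
  induction e with
  | h a b =>
  simp only [SimpleGraph.Subgraph.mem_edgeSet, Set.mem_setOf_eq]
  constructor
  · intro hab
    rcases hm.2.2.2.1 a with ⟨i, rfl⟩ | ⟨i, rfl⟩
    · obtain ⟨w, hw, huniq⟩ := hmat (hspan (x i))
      have hb1 : b = w := huniq b hab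
      have hy : y i = w := huniq (y i) (hMi i)
      exact ⟨i, by rw [hb1, ← hy]⟩
    · obtain ⟨w, hw, huniq⟩ := hmat (hspan (y i))
      have hb1 : b = w := huniq b hab
      have hx' : x i = w := huniq (x i) (hMi i).symm
      exact ⟨i, by rw [hb1, ← hx', Sym2.eq_swap]⟩
  · rintro ⟨i, he⟩
    rw [Sym2.eq_iff] at he
    rcases he with ⟨rfl, rfl⟩ | ⟨rfl, rfl⟩
    · exact hMi i
    · exact (hMi i).symm
end

section
/- Let G be an unmixed bipartite graph with perfect matching {x_1,y_1},...,{x_n,y_n}. Then the following are equivalent: (a) for all i ≠ j, not both x_i ~ y_j and x_j ~ y_i; (b) G has a unique perfect matching. -/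
open SimpleGraph MvPolynomial

variable {V : Type*}

/-!
A perfect matching of a bipartite graph with perfect matching `{x i, y i}` is the same as a
permutation `π` with `x k ~ y (π k)` for all `k`, so uniqueness of the perfect matching means that
the identity is the only such permutation. Condition 1 makes `i ≼ j :⇔ x i ~ y j` transitive, and
condition 2 makes it antisymmetric. A permutation moving every point upwards in a transitive,
antisymmetric relation is the identity, since following a cycle leads back to its start. Conversely,
if `x i ~ y j` and `x j ~ y i` with `i ≠ j`, the transposition `(i j)` is a second such permutation.
-/

theorem Equiv.Perm.eq_one_of_forall_rel_apply {α : Type*} [Finite α] {r : α → α → Prop}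
    [IsTrans α r] [Std.Antisymm r] {σ : Equiv.Perm α} (h : ∀ a, r a (σ a)) : σ = 1 := by
  have chain : ∀ m a, r a ((σ ^ (m + 1)) a) := by
    intro m
    induction m with
    | zero => simpa using h
    | succ m ih =>
      intro a
      rw [pow_succ, Equiv.Perm.mul_apply]
      exact _root_.trans (h a) (ih (σ a))
  ext a
  -- `σ ^ (2 * orderOf σ) = 1`, split as `(m + 1) + 1` so that `chain` applies even when `σ = 1`
  have hperiod : (σ ^ (2 * orderOf σ - 2 + 1)) (σ a) = a := by
    have := orderOf_pos σ
    rw [← Equiv.Perm.mul_apply, ← pow_succ, show 2 * orderOf σ - 2 + 1 + 1 = orderOf σ * 2 by omega,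
      pow_mul, pow_orderOf_eq_one, one_pow, Equiv.Perm.one_apply]
  have hback : r (σ a) a := by simpa only [hperiod] using chain (2 * orderOf σ - 2) (σ a)
  exact (antisymm (h a) hback).symm

theorem SimpleGraph.Subgraph.IsPerfectMatching.eq_of_le {G : SimpleGraph V} {M M' : G.Subgraph}
    (hM : M.IsPerfectMatching) (hM' : M'.IsPerfectMatching) (h : M ≤ M') : M = M' := by
  refine le_antisymm h ⟨fun v _ => hM.2 v, fun v w hvw => ?_⟩
  obtain ⟨u, hu, -⟩ := hM.1 (hM.2 v)
  rwa [(hM'.1 (hM'.2 v)).unique hvw (h.2 hu)]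

section PermMatching

variable {G : SimpleGraph V} {n : ℕ} {x y : Fin n → V}

def permMatching {π : Equiv.Perm (Fin n)} (hπ : ∀ k, G.Adj (x k) (y (π k))) : G.Subgraph where
  verts := Set.univ
  Adj a b := ∃ k, (a = x k ∧ b = y (π k)) ∨ (a = y (π k) ∧ b = x k)
  adj_sub := by rintro a b ⟨k, ⟨rfl, rfl⟩ | ⟨rfl, rfl⟩⟩; exacts [hπ k, (hπ k).symm]
  edge_vert := by simp
  symm := ⟨by rintro a b ⟨k, h | h⟩; exacts [⟨k, Or.inr ⟨h.2, h.1⟩⟩, ⟨k, Or.inl ⟨h.2, h.1⟩⟩]⟩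

section

variable {π : Equiv.Perm (Fin n)} (hπ : ∀ k, G.Adj (x k) (y (π k)))

lemma permMatching_adj_x_iff (hm : PMatch G n x y) {i : Fin n} {v : V} :
    (permMatching hπ).Adj (x i) v ↔ v = y (π i) := by
  obtain ⟨hxinj, -, hxy, -, -⟩ := hm
  constructor
  · rintro ⟨k, ⟨hik, rfl⟩ | ⟨hik, -⟩⟩
    · rw [hxinj hik]
    · exact absurd hik (hxy i (π k))
  · rintro rfl
    exact ⟨i, Or.inl ⟨rfl, rfl⟩⟩

lemma permMatching_adj_y_iff (hm : PMatch G n x y) {i : Fin n} {v : V} :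
    (permMatching hπ).Adj (y (π i)) v ↔ v = x i := by
  obtain ⟨-, hyinj, hxy, -, -⟩ := hm
  constructor
  · rintro ⟨k, ⟨hik, -⟩ | ⟨hik, rfl⟩⟩
    · exact absurd hik.symm (hxy k (π i))
    · rw [π.injective (hyinj hik)]
  · rintro rfl
    exact ⟨i, Or.inr ⟨rfl, rfl⟩⟩

lemma permMatching_isPerfectMatching (hm : PMatch G n x y) :
    (permMatching hπ).IsPerfectMatching := by
  rw [Subgraph.isPerfectMatching_iff]
  intro v
  rcases hm.2.2.2.1 v with ⟨i, rfl⟩ | ⟨j, rfl⟩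
  · exact ⟨y (π i), (permMatching_adj_x_iff hπ hm).2 rfl,
      fun w => (permMatching_adj_x_iff hπ hm).1⟩
  · obtain ⟨i, rfl⟩ := π.surjective j
    exact ⟨x i, (permMatching_adj_y_iff hπ hm).2 rfl,
      fun w => (permMatching_adj_y_iff hπ hm).1⟩

lemma eq_of_permMatching_eq (hm : PMatch G n x y) {π' : Equiv.Perm (Fin n)}
    (hπ' : ∀ k, G.Adj (x k) (y (π' k))) (h : permMatching hπ = permMatching hπ') : π = π' := by
  refine Equiv.ext fun i => ?_
  have hadj : (permMatching hπ').Adj (x i) (y (π i)) := h ▸ (permMatching_adj_x_iff hπ hm).2 rfl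
  exact hm.2.1 ((permMatching_adj_x_iff hπ' hm).1 hadj)

end

lemma SimpleGraph.Subgraph.IsPerfectMatching.exists_eq_permMatching
    (hb : IsBipartition G (Set.range x) (Set.range y)) (hm : PMatch G n x y) {M : G.Subgraph}
    (hM : M.IsPerfectMatching) :
    ∃ (π : Equiv.Perm (Fin n)) (hπ : ∀ k, G.Adj (x k) (y (π k))), M = permMatching hπ := by
  have hpartner := Subgraph.isPerfectMatching_iff.1 hM
  have : ∀ i, ∃ j, M.Adj (x i) (y j) := by
    intro i
    obtain ⟨w, hw, -⟩ := hpartner (x i)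
    rcases hb.2.2 (M.adj_sub hw) with ⟨-, j, rfl⟩ | ⟨⟨j, hj⟩, -⟩
    · exact ⟨j, hw⟩
    · exact absurd hj.symm (hm.2.2.1 i j)
  choose σ hσ using this
  have hσinj : Function.Injective σ := fun i j hij =>
    hm.1 ((hpartner (y (σ i))).unique (hσ i).symm (hij ▸ (hσ j).symm))
  let π := Equiv.ofBijective σ (Finite.injective_iff_bijective.1 hσinj)
  have hπ : ∀ k, G.Adj (x k) (y (π k)) := fun k => M.adj_sub (hσ k)
  refine ⟨π, hπ, (Subgraph.IsPerfectMatching.eq_of_le (permMatching_isPerfectMatching hπ hm) hM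
    ⟨fun v _ => hM.2 v, ?_⟩).symm⟩
  rintro a b ⟨k, ⟨rfl, rfl⟩ | ⟨rfl, rfl⟩⟩
  exacts [hσ k, (hσ k).symm]

lemma existsUnique_isPerfectMatching_iff (hb : IsBipartition G (Set.range x) (Set.range y))
    (hm : PMatch G n x y) :
    (∃! M : G.Subgraph, M.IsPerfectMatching) ↔
      ∀ π : Equiv.Perm (Fin n), (∀ k, G.Adj (x k) (y (π k))) → π = 1 := by
  have hid : ∀ k, G.Adj (x k) (y ((1 : Equiv.Perm (Fin n)) k)) := hm.2.2.2.2
  constructor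
  · rintro ⟨M, -, huniq⟩ π hπ
    exact eq_of_permMatching_eq hπ hm hid <|
      (huniq _ (permMatching_isPerfectMatching hπ hm)).trans
        (huniq _ (permMatching_isPerfectMatching hid hm)).symm
  · intro hone
    refine ⟨permMatching hid, permMatching_isPerfectMatching hid hm, fun M hM => ?_⟩
    obtain ⟨π, hπ, rfl⟩ := hM.exists_eq_permMatching hb hm
    obtain rfl := hone π hπ
    rfl

lemma cond2_iff_forall_perm_eq_one (hadj : ∀ i, G.Adj (x i) (y i)) (h1 : Cond1 G n x y) :
    Cond2 G n x y ↔ ∀ π : Equiv.Perm (Fin n), (∀ k, G.Adj (x k) (y (π k))) → π = 1 := by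
  constructor
  · intro h2 π hπ
    let r i j := G.Adj (x i) (y j)
    have : IsTrans (Fin n) r := ⟨fun i j k hij hjk => h1 j (x i) hij.symm (y k) hjk⟩
    have : Std.Antisymm r := ⟨fun i j hij hji => by_contra fun hne => h2 i j hne hij hji⟩
    exact Equiv.Perm.eq_one_of_forall_rel_apply (r := r) hπ
  · intro hone i j hne hij hji
    have hswap : ∀ k, G.Adj (x k) (y (Equiv.swap i j k)) := by
      intro k
      rw [Equiv.swap_apply_def]
      split_ifs with hki hkj
      exacts [hki ▸ hij, hkj ▸ hji, hadj k]
    exact hne (Equiv.swap_eq_one_iff.1 (hone _ hswap))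

end PermMatching

theorem stmt14_general (G : SimpleGraph V) {n : ℕ} (x y : Fin n → V)
    (hb : IsBipartition G (Set.range x) (Set.range y))
    (hm : PMatch G n x y) (h1 : Cond1 G n x y) :
    Cond2 G n x y ↔ ∃! M : G.Subgraph, M.IsPerfectMatching := by
  rw [existsUnique_isPerfectMatching_iff hb hm]
  exact cond2_iff_forall_perm_eq_one hm.2.2.2.2 h1

/-- For an unmixed bipartite graph with perfect matching `{x i, y i}`, condition 2
holds iff the graph has a unique perfect matching. -/
theorem stmt14 [Fintype V] (G : SimpleGraph V) {n : ℕ} (x y : Fin n → V)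
    (hb : IsBipartition G (Set.range x) (Set.range y))
    (hm : PMatch G n x y) (hu : Unmixed G) (h1 : Cond1 G n x y) :
    Cond2 G n x y ↔ ∃! M : G.Subgraph, M.IsPerfectMatching :=
  stmt14_general G x y hb hm h1
end

section
/- Let G be a bipartite graph with bipartition {x_1,...,x_n}, {y_1,...,y_n}, x_i ~ y_i for all i, such that every vertex of N(y_i) is adjacent to every vertex of N(x_i) for each i (i.e., G is unmixed with the given matching). If for all i ≠ j not both x_i ~ y_j and x_j ~ y_i hold, then G admits an ordering of the matching edges {x_{σ(1)},y_{σ(1)}},...,{x_{σ(n)},y_{σ(n)}} such that x_{σ(i)} ~ y_{σ(j)} implies i ≤ j. -/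
open SimpleGraph MvPolynomial

variable {V : Type*}

/-- A bipartite graph with a perfect matching satisfying conditions 1 and 2 admits an
ordering of its matching edges realizing the Herzog–Hibi condition
`x_{σ i} ~ y_{σ j} → i ≤ j`. -/
theorem stmt17 [Fintype V] (G : SimpleGraph V) {n : ℕ} (x y : Fin n → V)
    (hb : IsBipartition G (Set.range x) (Set.range y))
    (hm : PMatch G n x y) (h1 : Cond1 G n x y) (h2 : Cond2 G n x y) :
    ∃ σ : Equiv.Perm (Fin n), ∀ i j : Fin n, G.Adj (x (σ i)) (y (σ j)) → i ≤ j := by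
  classical
  obtain ⟨hx, hy, hxy, hcov, hadj⟩ := hm
  -- the relation r i j := x i ~ y j is a partial order on Fin n
  have hrefl : ∀ i, G.Adj (x i) (y i) := hadj
  have htrans : ∀ {i j k}, G.Adj (x i) (y j) → G.Adj (x j) (y k) → G.Adj (x i) (y k) := by
    intro i j k hij hjk
    exact h1 j (x i) hij.symm (y k) hjk
  have hantisymm : ∀ {i j}, G.Adj (x i) (y j) → G.Adj (x j) (y i) → i = j := by
    intro i j hij hji
    by_contra hne
    exact h2 i j hne hij hji
  let po : PartialOrder (Fin n) :=
    { le := fun i j => G.Adj (x i) (y j)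
      lt := fun i j => G.Adj (x i) (y j) ∧ ¬ G.Adj (x j) (y i)
      lt_iff_le_not_ge := fun _ _ => Iff.rfl
      le_refl := hrefl
      le_trans := fun _ _ _ => htrans
      le_antisymm := fun _ _ => hantisymm }
  letI : PartialOrder (Fin n) := po
  haveI : Fintype (LinearExtension (Fin n)) := (inferInstance : Fintype (Fin n))
  let c : LinearExtension (Fin n) ≃ Fin n := Equiv.refl (Fin n)
  have hcard : Fintype.card (LinearExtension (Fin n)) = n :=
    (Fintype.card_congr c).trans (Fintype.card_fin n)
  let e : Fin n ≃o LinearExtension (Fin n) := monoEquivOfFin _ hcard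
  refine ⟨(e.toEquiv.trans c : Equiv.Perm (Fin n)), ?_⟩
  intro i j hadj'
  have hle : po.le (c (e i)) (c (e j)) := hadj'
  have : toLinearExtension (c (e i)) ≤ toLinearExtension (c (e j)) :=
    toLinearExtension.monotone hle
  have h2' : (e i : LinearExtension (Fin n)) ≤ e j := this
  exact e.le_iff_le.mp h2'
end
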